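/- Let ℋ be a (complex) Banach space and f : ℝ → ℋ an equi-Weyl almost periodic function in W(ℝ, ℋ) (with respect to the truncated metric min{1, ‖x−y‖}). Suppose that for every ε > 0 there exist δ > 0 and l > 0 such that sup_{ξ∈ℝ} meas{t ∈ [ξ, ξ+l] : ‖f(t)‖ < δ} < ε·l. Then the function sgn f, defined by (sgn f)(t) = f(t)/‖f(t)‖ if f(t) ≠ 0 and 0 otherwise, belongs to W₁(ℝ, ℋ), and the set T = {t ∈ ℝ : f(t) = 0} satisfies lim_{l→∞} sup_{ξ} (1/l) meas(T ∩ [ξ, ξ+l]) = 0. -/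

import Mathlib

/-!
Off the set `{‖x‖ < δ}`, `sgn` is `2/δ`-Lipschitz for the truncated metric `min 1 ‖x - y‖`
(when `δ ≤ 1`), and `‖sgn x - sgn y‖ ≤ 2` everywhere. Hence the mean of `‖sgn f - sgn f(· + τ)‖`
over a window is at most twice the relative measure of `{‖f‖ < δ}` in it plus `2/δ` times the
mean of `min 1 ‖f - f(· + τ)‖`. The hypothesis makes the first term small on all long windows,
and `W`-almost periods of `f` make the second one small. The zero set of `f` lies in every
`{‖f‖ < δ}`, which gives the density statement.
-/

open MeasureTheory Filter

/-- A set `T ⊆ ℝ` is relatively dense. -/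
def RelDense (T : Set ℝ) : Prop :=
  ∃ a > (0 : ℝ), ∀ ξ : ℝ, ∃ τ ∈ T, ξ ≤ τ ∧ τ ≤ ξ + a

/-- `f ∈ W(ℝ,ℋ)`: equi-Weyl a.p. w.r.t. the truncated metric `min 1 ‖x−y‖`. -/
def WAPn {H : Type*} [NormedAddCommGroup H] (f : ℝ → H) : Prop :=
  AEStronglyMeasurable f volume ∧
    ∀ ε > (0 : ℝ), ∃ l > (0 : ℝ), RelDense {τ : ℝ |
      (⨆ ξ : ℝ, (1 / l) * ∫ t in ξ..(ξ + l), min 1 ‖f t - f (t + τ)‖) < ε}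

/-- `f ∈ W₁(ℝ,ℋ)`: equi-Weyl a.p. of degree 1. -/
def W1APn {H : Type*} [NormedAddCommGroup H] (f : ℝ → H) : Prop :=
  AEStronglyMeasurable f volume ∧
    (∃ C : ℝ, ∀ ξ : ℝ, (∫ t in ξ..(ξ + 1), ‖f t‖) ≤ C) ∧
    ∀ ε > (0 : ℝ), ∃ l > (0 : ℝ), RelDense {τ : ℝ |
      (⨆ ξ : ℝ, (1 / l) * ∫ t in ξ..(ξ + l), ‖f t - f (t + τ)‖) < ε}

open scoped Classical in
/-- The "sign" of a vector: `h/‖h‖` if `h ≠ 0`, and `0` otherwise. -/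
noncomputable def sgn {H : Type*} [NormedAddCommGroup H] [NormedSpace ℂ H] (h : H) : H :=
  if h = 0 then 0 else ‖h‖⁻¹ • h

open Set

theorem RelDense.mono {T T' : Set ℝ} (hT : RelDense T) (h : T ⊆ T') : RelDense T' := by
  obtain ⟨a, ha, hT⟩ := hT
  exact ⟨a, ha, fun ξ => (hT ξ).imp fun τ hτ => ⟨h hτ.1, hτ.2⟩⟩

section Sgn

variable {H : Type*} [NormedAddCommGroup H] [NormedSpace ℂ H]

theorem sgn_eq_inv_norm_smul (h : H) : sgn h = ‖h‖⁻¹ • h := by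
  unfold sgn
  split_ifs with h0 <;> simp [h0]

theorem norm_sgn_le (h : H) : ‖sgn h‖ ≤ 1 := by
  rw [sgn_eq_inv_norm_smul, norm_smul, norm_inv, norm_norm]
  exact inv_mul_le_one_of_le₀ le_rfl (norm_nonneg h)

theorem norm_sgn_sub_sgn_le_two (x y : H) : ‖sgn x - sgn y‖ ≤ 2 := by
  linarith [norm_sub_le (sgn x) (sgn y), norm_sgn_le x, norm_sgn_le y]

theorem norm_sgn_sub_sgn_le_mul_div {x : H} (hx : x ≠ 0) (y : H) :
    ‖sgn x - sgn y‖ ≤ 2 * ‖x - y‖ / ‖x‖ := by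
  have hx' : 0 < ‖x‖ := norm_pos_iff.2 hx
  have hsplit : sgn x - sgn y = ‖x‖⁻¹ • (x - y) + (‖x‖⁻¹ - ‖y‖⁻¹) • y := by
    simp only [sgn_eq_inv_norm_smul, smul_sub, sub_smul]
    abel
  have hfirst : ‖‖x‖⁻¹ • (x - y)‖ = ‖x - y‖ / ‖x‖ := by
    rw [norm_smul, norm_inv, norm_norm, inv_mul_eq_div]
  have hsecond : ‖(‖x‖⁻¹ - ‖y‖⁻¹) • y‖ ≤ ‖x - y‖ / ‖x‖ := by
    rcases eq_or_ne y 0 with rfl | hy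
    · simp only [smul_zero, norm_zero]; positivity
    have hy' : 0 < ‖y‖ := norm_pos_iff.2 hy
    have : (‖x‖⁻¹ - ‖y‖⁻¹) * ‖y‖ = (‖y‖ - ‖x‖) / ‖x‖ := by field_simp
    rw [norm_smul, Real.norm_eq_abs, ← abs_of_pos hy', ← abs_mul, abs_of_pos hy', this, abs_div,
      abs_of_pos hx', norm_sub_rev x y]
    gcongr
    exact abs_norm_sub_norm_le y x
  calc ‖sgn x - sgn y‖ ≤ ‖x - y‖ / ‖x‖ + ‖x - y‖ / ‖x‖ := by
        rw [hsplit]; exact (norm_add_le _ _).trans (add_le_add hfirst.le hsecond)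
    _ = 2 * ‖x - y‖ / ‖x‖ := by ring

theorem norm_sgn_sub_sgn_le_div_mul_min {δ : ℝ} (hδ : 0 < δ) (hδ1 : δ ≤ 1) {x : H}
    (hx : δ ≤ ‖x‖) (y : H) : ‖sgn x - sgn y‖ ≤ 2 / δ * min 1 ‖x - y‖ := by
  rcases le_total ‖x - y‖ 1 with hxy | hxy
  · rw [min_eq_right hxy]
    calc ‖sgn x - sgn y‖ ≤ 2 * ‖x - y‖ / ‖x‖ :=
          norm_sgn_sub_sgn_le_mul_div (norm_pos_iff.1 (hδ.trans_le hx)) y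
      _ ≤ 2 * ‖x - y‖ / δ := by gcongr
      _ = 2 / δ * ‖x - y‖ := by ring
  · rw [min_eq_left hxy, mul_one]
    exact (norm_sgn_sub_sgn_le_two x y).trans (le_div_self zero_le_two hδ hδ1)

theorem MeasureTheory.AEStronglyMeasurable.sgn {α : Type*} [MeasurableSpace α] {μ : Measure α}
    {f : α → H} (hf : AEStronglyMeasurable f μ) : AEStronglyMeasurable (fun t => sgn (f t)) μ := by
  simp only [sgn_eq_inv_norm_smul]
  exact hf.norm.aemeasurable.inv.aestronglyMeasurable.smul hf

end Sgn

theorem volume_inter_Icc_ne_top (S : Set ℝ) (a b : ℝ) : volume (S ∩ Icc a b) ≠ ⊤ :=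
  (measure_inter_lt_top_of_right_ne_top measure_Icc_lt_top.ne).ne

-- `[ξ, ξ + L]` is covered by `⌊L / l⌋ + 1 ≤ 2 L / l` consecutive windows of length `l`.
theorem le_two_mul_of_window_le {F : ℝ → ℝ → ℝ} (hmono : ∀ a b c, b ≤ c → F a b ≤ F a c)
    (hadd : ∀ a b c, F a c ≤ F a b + F b c) {l c : ℝ} (hl : 0 < l) (hc : 0 ≤ c)
    (h : ∀ ξ, F ξ (ξ + l) ≤ c * l) {L : ℝ} (hL : l ≤ L) (ξ : ℝ) : F ξ (ξ + L) ≤ 2 * c * L := by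
  have hmul : ∀ n : ℕ, ∀ ξ, F ξ (ξ + (n + 1) * l) ≤ (n + 1) * (c * l) := by
    intro n
    induction n with
    | zero => simpa using h
    | succ n ih =>
      intro ξ
      have hend : ξ + ((n + 1 : ℕ) + 1) * l = ξ + (n + 1) * l + l := by push_cast; ring
      calc F ξ (ξ + ((n + 1 : ℕ) + 1) * l)
          ≤ F ξ (ξ + (n + 1) * l) + F (ξ + (n + 1) * l) (ξ + (n + 1) * l + l) := by
            rw [hend]; exact hadd _ _ _
        _ ≤ (n + 1) * (c * l) + c * l := add_le_add (ih ξ) (h _)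
        _ = ((n + 1 : ℕ) + 1) * (c * l) := by push_cast; ring
  set n := ⌊L / l⌋₊
  have hLn : L ≤ (n + 1) * l := by
    rw [← div_le_iff₀ hl]; exact (Nat.lt_floor_add_one _).le
  have hnL : n * l ≤ L := by
    rw [← le_div_iff₀ hl]; exact Nat.floor_le (div_nonneg (hl.le.trans hL) hl.le)
  calc F ξ (ξ + L) ≤ F ξ (ξ + (n + 1) * l) := hmono _ _ _ (by linarith)
    _ ≤ (n + 1) * (c * l) := hmul n ξ
    _ ≤ 2 * c * L := by nlinarith

theorem measureReal_inter_Icc_le_two_mul {S : Set ℝ} {l c : ℝ} (hl : 0 < l) (hc : 0 ≤ c)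
    (h : ∀ ξ, volume.real (S ∩ Icc ξ (ξ + l)) ≤ c * l) {L : ℝ} (hL : l ≤ L) (ξ : ℝ) :
    volume.real (S ∩ Icc ξ (ξ + L)) ≤ 2 * c * L := by
  refine le_two_mul_of_window_le (F := fun a b => volume.real (S ∩ Icc a b)) (fun a b c hbc => ?_)
    (fun a b c => ?_) hl hc h hL ξ
  · exact measureReal_mono (inter_subset_inter_right _ (Icc_subset_Icc_right hbc))
      (volume_inter_Icc_ne_top _ _ _)
  · refine (measureReal_mono ?_ ?_).trans (measureReal_union_le _ _)
    · rw [← inter_union_distrib_left]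
      exact inter_subset_inter_right _ Icc_subset_Icc_union_Icc
    · exact measure_union_ne_top (volume_inter_Icc_ne_top _ _ _)
        (volume_inter_Icc_ne_top _ _ _)

theorem intervalIntegral_le_two_mul {g : ℝ → ℝ} (hg0 : ∀ t, 0 ≤ g t)
    (hgi : ∀ a b, IntervalIntegrable g volume a b) {l c : ℝ} (hl : 0 < l) (hc : 0 ≤ c)
    (h : ∀ ξ, ∫ t in ξ..ξ + l, g t ≤ c * l) {L : ℝ} (hL : l ≤ L) (ξ : ℝ) :
    ∫ t in ξ..ξ + L, g t ≤ 2 * c * L := by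
  refine le_two_mul_of_window_le (F := fun a b => ∫ t in a..b, g t) (fun a b c hbc => ?_)
    (fun a b c => ?_) hl hc h hL ξ
  · rw [← intervalIntegral.integral_add_adjacent_intervals (hgi a b) (hgi b c)]
    linarith [intervalIntegral.integral_nonneg (μ := volume) hbc fun t _ => hg0 t]
  · exact (intervalIntegral.integral_add_adjacent_intervals (hgi a b) (hgi b c)).ge

theorem intervalIntegrable_of_norm_le {E : Type*} [NormedAddCommGroup E] {g : ℝ → E}
    (hg : AEStronglyMeasurable g volume) {C : ℝ} (hC : ∀ t, ‖g t‖ ≤ C) (a b : ℝ) :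
    IntervalIntegrable g volume a b :=
  (intervalIntegrable_const (c := C)).mono_fun hg.restrict
    (ae_of_all _ fun t => (hC t).trans (le_abs_self C))

theorem intervalIntegral_indicator_const_le {S : Set ℝ} (hS : NullMeasurableSet S) {a b c : ℝ}
    (hab : a ≤ b) (hc : 0 ≤ c) :
    ∫ t in a..b, S.indicator (fun _ => c) t ≤ c * volume.real (S ∩ Icc a b) := by
  rw [intervalIntegral.integral_of_le hab,
    integral_indicator₀ (hS.mono_ac Measure.restrict_le_self.absolutelyContinuous),
    setIntegral_const, smul_eq_mul, measureReal_restrict_apply' measurableSet_Ioc, mul_comm]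
  gcongr
  · exact volume_inter_Icc_ne_top _ _ _
  · exact Ioc_subset_Icc_self

theorem intervalIntegral_le_two_mul_of_iSup_lt {g : ℝ → ℝ} (hg0 : ∀ t, 0 ≤ g t)
    (hg1 : ∀ t, g t ≤ 1) (hgm : AEStronglyMeasurable g volume) {l c : ℝ} (hl : 0 < l)
    (hc : 0 ≤ c) (h : (⨆ ξ, (1 / l) * ∫ t in ξ..ξ + l, g t) < c) {L : ℝ} (hL : l ≤ L) (ξ : ℝ) :
    ∫ t in ξ..ξ + L, g t ≤ 2 * c * L := by
  have hgi := intervalIntegrable_of_norm_le hgm (C := 1) fun t => by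
    rw [Real.norm_eq_abs, abs_of_nonneg (hg0 t)]; exact hg1 t
  have hbdd : BddAbove (range fun ξ => (1 / l) * ∫ t in ξ..ξ + l, g t) := by
    refine ⟨1, forall_mem_range.2 fun ξ => ?_⟩
    rw [one_div, inv_mul_le_one₀ hl]
    simpa using intervalIntegral.integral_mono_on (by linarith : ξ ≤ ξ + l) (hgi _ _)
      intervalIntegrable_const fun t _ => hg1 t
  refine intervalIntegral_le_two_mul hg0 hgi hl hc (fun ξ => ?_) hL ξ
  have := (le_ciSup hbdd ξ).trans h.le
  rwa [one_div, inv_mul_le_iff₀ hl, mul_comm] at this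

section Weyl

variable {H : Type*} [NormedAddCommGroup H]

def HasSparseSmallValues (f : ℝ → H) : Prop :=
  ∀ ε > (0 : ℝ), ∃ δ > (0 : ℝ), ∃ l > (0 : ℝ),
    (⨆ ξ : ℝ, (volume {t ∈ Icc ξ (ξ + l) | ‖f t‖ < δ}).toReal) < ε * l

theorem HasSparseSmallValues.exists_measureReal_inter_Icc_le {f : ℝ → H}
    (hsep : HasSparseSmallValues f) {ε : ℝ} (hε : 0 < ε) :
    ∃ δ > (0 : ℝ), δ ≤ 1 ∧ ∃ l > (0 : ℝ), ∀ L ≥ l, ∀ ξ,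
      volume.real ({t | ‖f t‖ < δ} ∩ Icc ξ (ξ + L)) ≤ ε * L := by
  obtain ⟨δ, hδ, l, hl, hsup⟩ := hsep (ε / 2) (by positivity)
  have hbdd : BddAbove (range fun ξ => (volume {t ∈ Icc ξ (ξ + l) | ‖f t‖ < δ}).toReal) := by
    refine ⟨l, forall_mem_range.2 fun ξ => ?_⟩
    calc _ ≤ volume.real (Icc ξ (ξ + l)) :=
          measureReal_mono (sep_subset _ _) measure_Icc_lt_top.ne
      _ = l := by simp [hl.le]
  have hwindow : ∀ ξ, volume.real ({t | ‖f t‖ < min δ 1} ∩ Icc ξ (ξ + l)) ≤ ε / 2 * l := by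
    intro ξ
    calc _ ≤ volume.real {t ∈ Icc ξ (ξ + l) | ‖f t‖ < δ} := by
          rw [inter_comm]
          exact measureReal_mono (fun t ht => ⟨ht.1, ht.2.trans_le (min_le_left _ _)⟩)
            (measure_ne_top_of_subset (sep_subset _ _) measure_Icc_lt_top.ne)
      _ ≤ ε / 2 * l := (le_ciSup hbdd ξ).trans hsup.le
  refine ⟨min δ 1, lt_min hδ one_pos, min_le_right _ _, l, hl, fun L hL ξ => ?_⟩
  have := measureReal_inter_Icc_le_two_mul hl (by positivity) hwindow hL ξ
  linarith

theorem HasSparseSmallValues.tendsto_iSup_measureReal_zero_inter_Icc {f : ℝ → H}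
    (hsep : HasSparseSmallValues f) :
    Tendsto (fun l : ℝ => ⨆ ξ : ℝ, (1 / l) * volume.real ({t : ℝ | f t = 0} ∩ Icc ξ (ξ + l)))
      atTop (nhds 0) := by
  refine tendsto_order.2 ⟨fun a ha => ?_, fun a ha => ?_⟩
  · filter_upwards [eventually_gt_atTop 0] with L hL
    exact ha.trans_le (Real.iSup_nonneg fun ξ => by positivity)
  obtain ⟨δ, hδ, -, l, hl, hsmall⟩ := hsep.exists_measureReal_inter_Icc_le (half_pos ha)
  filter_upwards [eventually_ge_atTop l] with L hL
  have hL0 : 0 < L := hl.trans_le hL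
  have hzero : {t | f t = 0} ⊆ {t | ‖f t‖ < δ} := fun t (ht : f t = 0) =>
    show ‖f t‖ < δ by rwa [ht, norm_zero]
  refine (ciSup_le fun ξ => ?_).trans_lt (half_lt_self ha)
  rw [one_div, inv_mul_le_iff₀ hL0]
  calc _ ≤ volume.real ({t | ‖f t‖ < δ} ∩ Icc ξ (ξ + L)) :=
        measureReal_mono (inter_subset_inter_left _ hzero) (volume_inter_Icc_ne_top _ _ _)
    _ ≤ a / 2 * L := hsmall L hL ξ
    _ = L * (a / 2) := mul_comm _ _

variable [NormedSpace ℂ H]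

theorem intervalIntegral_norm_sgn_sub_sgn_le {f g : ℝ → H} (hf : AEStronglyMeasurable f volume)
    (hg : AEStronglyMeasurable g volume) {δ : ℝ} (hδ : 0 < δ) (hδ1 : δ ≤ 1) {a b : ℝ}
    (hab : a ≤ b) :
    ∫ t in a..b, ‖sgn (f t) - sgn (g t)‖ ≤
      2 * volume.real ({t | ‖f t‖ < δ} ∩ Icc a b) + 2 / δ * ∫ t in a..b, min 1 ‖f t - g t‖ := by
  set S := {t | ‖f t‖ < δ}
  have hS : NullMeasurableSet S := nullMeasurableSet_lt hf.norm.aemeasurable aemeasurable_const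
  have hind : IntervalIntegrable (S.indicator fun _ => (2 : ℝ)) volume a b :=
    intervalIntegrable_of_norm_le (aestronglyMeasurable_const.indicator₀ hS) (C := 2)
      (fun t => (norm_indicator_le_norm_self _ t).trans (by norm_num)) a b
  have hmin : IntervalIntegrable (fun t => min 1 ‖f t - g t‖) volume a b :=
    intervalIntegrable_of_norm_le
      ((continuous_const.min continuous_norm).comp_aestronglyMeasurable (hf.sub hg)) (C := 1)
      (fun t => by
        rw [Real.norm_eq_abs, abs_of_nonneg (le_min zero_le_one (norm_nonneg _))]
        exact min_le_left _ _) a b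
  have hdiff : IntervalIntegrable (fun t => ‖sgn (f t) - sgn (g t)‖) volume a b :=
    intervalIntegrable_of_norm_le (hf.sgn.sub hg.sgn).norm (C := 2)
      (fun t => by rw [norm_norm]; exact norm_sgn_sub_sgn_le_two _ _) a b
  calc ∫ t in a..b, ‖sgn (f t) - sgn (g t)‖
      ≤ ∫ t in a..b, (S.indicator (fun _ => 2) t + 2 / δ * min 1 ‖f t - g t‖) := by
        refine intervalIntegral.integral_mono_on hab hdiff (hind.add (hmin.const_mul _))
          fun t _ => ?_
        by_cases ht : t ∈ S
        · rw [indicator_of_mem ht]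
          have : 0 ≤ 2 / δ * min 1 ‖f t - g t‖ := by positivity
          linarith [norm_sgn_sub_sgn_le_two (f t) (g t)]
        · rw [indicator_of_notMem ht, zero_add]
          exact norm_sgn_sub_sgn_le_div_mul_min hδ hδ1 (not_lt.1 ht) _
    _ = (∫ t in a..b, S.indicator (fun _ => 2) t) + 2 / δ * ∫ t in a..b, min 1 ‖f t - g t‖ := by
        rw [intervalIntegral.integral_add hind (hmin.const_mul _),
          intervalIntegral.integral_const_mul]
    _ ≤ 2 * volume.real (S ∩ Icc a b) + 2 / δ * ∫ t in a..b, min 1 ‖f t - g t‖ := by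
        gcongr
        exact intervalIntegral_indicator_const_le hS hab zero_le_two

theorem WAPn.w1APn_sgn {f : ℝ → H} (hf : WAPn f)
    (hsep : HasSparseSmallValues f) :
    W1APn (fun t => sgn (f t)) := by
  refine ⟨hf.1.sgn, ⟨1, fun ξ => ?_⟩, fun ε hε => ?_⟩
  · have hi := intervalIntegrable_of_norm_le hf.1.sgn.norm (C := 1)
      (fun t => by rw [norm_norm]; exact norm_sgn_le _) ξ (ξ + 1)
    simpa using intervalIntegral.integral_mono_on (by linarith : ξ ≤ ξ + 1) hi
      intervalIntegrable_const fun t _ => norm_sgn_le (f t)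
  obtain ⟨δ, hδ, hδ1, l₁, hl₁, hsmall⟩ :=
    hsep.exists_measureReal_inter_Icc_le (ε := ε / 8) (by positivity)
  obtain ⟨l₂, hl₂, hP⟩ := hf.2 (ε * δ / 16) (by positivity)
  have hL : 0 < max l₁ l₂ := lt_max_of_lt_left hl₁
  refine ⟨max l₁ l₂, hL, hP.mono fun τ hτ => ?_⟩
  have hshift : AEStronglyMeasurable (fun t => f (t + τ)) volume :=
    hf.1.comp_measurePreserving (measurePreserving_add_right volume τ)
  have hmin := intervalIntegral_le_two_mul_of_iSup_lt
    (fun t => le_min zero_le_one (norm_nonneg (f t - f (t + τ)))) (fun t => min_le_left _ _)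
    ((continuous_const.min continuous_norm).comp_aestronglyMeasurable (hf.1.sub hshift))
    hl₂ (by positivity) hτ (le_max_right l₁ l₂)
  have hwindow : ∀ ξ, (1 / max l₁ l₂) *
      ∫ t in ξ..ξ + max l₁ l₂, ‖sgn (f t) - sgn (f (t + τ))‖ ≤ ε / 2 := by
    intro ξ
    rw [one_div, inv_mul_le_iff₀ hL]
    calc _ ≤ _ := intervalIntegral_norm_sgn_sub_sgn_le hf.1 hshift hδ hδ1 (by linarith)
      _ ≤ 2 * (ε / 8 * max l₁ l₂) + 2 / δ * (2 * (ε * δ / 16) * max l₁ l₂) := by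
          gcongr
          exacts [hsmall _ (le_max_left _ _) ξ, hmin ξ]
      _ = max l₁ l₂ * (ε / 2) := by field_simp; ring
  exact (ciSup_le hwindow).trans_lt (by linarith)

end Weyl

theorem stmt10_general {H : Type*} [NormedAddCommGroup H] [NormedSpace ℂ H]
    (f : ℝ → H) (hf : WAPn f)
    (hsep : ∀ ε > (0 : ℝ), ∃ δ > (0 : ℝ), ∃ l > (0 : ℝ),
      (⨆ ξ : ℝ, (volume {t ∈ Set.Icc ξ (ξ + l) | ‖f t‖ < δ}).toReal) < ε * l) :
    W1APn (fun t => sgn (f t)) ∧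
      Tendsto
        (fun l : ℝ => ⨆ ξ : ℝ,
          (1 / l) * (volume ({t : ℝ | f t = 0} ∩ Set.Icc ξ (ξ + l))).toReal)
        atTop (nhds 0) :=
  ⟨hf.w1APn_sgn hsep, HasSparseSmallValues.tendsto_iSup_measureReal_zero_inter_Icc hsep⟩

theorem stmt10 {H : Type*} [NormedAddCommGroup H] [NormedSpace ℂ H] [CompleteSpace H]
    (f : ℝ → H) (hf : WAPn f)
    (hsep : ∀ ε > (0 : ℝ), ∃ δ > (0 : ℝ), ∃ l > (0 : ℝ),
      (⨆ ξ : ℝ, (volume {t ∈ Set.Icc ξ (ξ + l) | ‖f t‖ < δ}).toReal) < ε * l) :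
    W1APn (fun t => sgn (f t)) ∧
      Tendsto
        (fun l : ℝ => ⨆ ξ : ℝ,
          (1 / l) * (volume ({t : ℝ | f t = 0} ∩ Set.Icc ξ (ξ + l))).toReal)
        atTop (nhds 0) :=
  stmt10_general f hf hsep
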